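/- arXiv:1601.05686 — 2 statements merged into one kernel-verified Lean document; each statement's English description precedes it below -/
import Mathlib

section
/- If f = exp(g)·h is a probability density, where h is a probability density and g is bounded, then ψ = -∫ g h satisfies 0 ≤ ψ ≤ ||t||_∞ where t = g + ψ; in particular ψ = D(h||f) ≥ 0. -/
open MeasureTheory Real

/-- If `f = exp(g) h` is a probability density (with `h` a probability density and
`g` bounded), then `ψ = -∫ g h` satisfies `0 ≤ ψ ≤ ‖t‖_∞` with `t = g + ψ`;
moreover `ψ = D(h‖f)`, the generalized Kullback-Leibler divergence. -/
theorem psi_nonneg_of_density {d : ℕ}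
    (h : (Fin d → ℝ) → ℝ) (g : (Fin d → ℝ) → ℝ) (G : ℝ)
    (hh_meas : Measurable h) (hh_nonneg : ∀ x, 0 ≤ h x)
    (hh_int : Integrable h) (hh_prob : ∫ x, h x = 1)
    (hg_meas : Measurable g) (hg_bdd : ∀ x, |g x| ≤ G)
    (hf_prob : ∫ x, Real.exp (g x) * h x = 1) :
    0 ≤ (-∫ x, g x * h x) ∧
    (∀ T : ℝ, (∀ x, |g x + (-∫ y, g y * h y)| ≤ T) → (-∫ x, g x * h x) ≤ T) ∧
    (-∫ x, g x * h x) =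
      (∫ x, h x * Real.log (h x / (Real.exp (g x) * h x))) - (∫ x, h x) +
        (∫ x, Real.exp (g x) * h x) := by
  have hgh_int : Integrable (fun x => g x * h x) := by
    refine Integrable.mono' (hh_int.const_mul G)
      ((hg_meas.mul hh_meas).aestronglyMeasurable) ?_
    filter_upwards with x
    rw [norm_mul, Real.norm_eq_abs, Real.norm_eq_abs, abs_of_nonneg (hh_nonneg x)]
    exact mul_le_mul_of_nonneg_right (hg_bdd x) (hh_nonneg x)
  have heh_int : Integrable (fun x => Real.exp (g x) * h x) := by
    refine Integrable.mono' (hh_int.const_mul (Real.exp G))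
      (((Real.measurable_exp.comp hg_meas).mul hh_meas).aestronglyMeasurable) ?_
    filter_upwards with x
    rw [norm_mul, Real.norm_eq_abs, Real.norm_eq_abs, abs_of_nonneg (hh_nonneg x),
      abs_of_nonneg (Real.exp_pos _).le]
    exact mul_le_mul_of_nonneg_right
      (Real.exp_le_exp.mpr ((le_abs_self _).trans (hg_bdd x))) (hh_nonneg x)
  have key : ∫ x, g x * h x ≤ 0 := by
    have hle : ∫ x, g x * h x ≤ ∫ x, (Real.exp (g x) * h x - h x) := by
      refine integral_mono hgh_int (heh_int.sub hh_int) fun x => ?_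
      have := Real.add_one_le_exp (g x)
      nlinarith [hh_nonneg x]
    rwa [integral_sub heh_int hh_int, hf_prob, hh_prob, sub_self] at hle
  refine ⟨by linarith, ?_, ?_⟩
  · intro T hT
    set ψ := -∫ y, g y * h y with hψ
    have hub : ∀ x, Real.exp (g x) * h x ≤ Real.exp (T - ψ) * h x := by
      intro x
      have h1 : g x + ψ ≤ T := (abs_le.mp (hT x)).2
      exact mul_le_mul_of_nonneg_right (Real.exp_le_exp.mpr (by linarith)) (hh_nonneg x)
    have : (1 : ℝ) ≤ Real.exp (T - ψ) := by
      have := integral_mono heh_int (hh_int.const_mul (Real.exp (T - ψ))) hub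
      rwa [hf_prob, integral_const_mul, hh_prob, mul_one] at this
    by_contra hc
    push_neg at hc
    have := Real.exp_lt_one_iff.mpr (by linarith : T - ψ < 0)
    linarith
  · have heq : (fun x => h x * Real.log (h x / (Real.exp (g x) * h x)))
        = fun x => -(g x * h x) := by
      funext x
      rcases eq_or_lt_of_le (hh_nonneg x) with h0 | h0
      · simp [← h0]
      · have : h x / (Real.exp (g x) * h x) = Real.exp (-g x) := by
          rw [Real.exp_neg]
          field_simp
        rw [this, Real.log_exp]; ring
    rw [heq, integral_neg, hh_prob, hf_prob]
    ring
end

section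
/- Log-determinant lower bound for Toeplitz matrices: if ℓ ∈ L^2(h) satisfies ∫ ℓ h = 1 and 1/2 ≤ ℓ(x) ≤ 3/2 a.e., then log det(T_n(ℓ)) ≥ -n ||ℓ - 1||^2_{L^2(h)}. -/
open MeasureTheory Real Matrix

/-- The `n × n` Toeplitz matrix of Fourier coefficients of `ℓ`. -/
noncomputable def toeplitz (n : ℕ) (ℓ : ℝ → ℝ) : Matrix (Fin n) (Fin n) ℂ :=
  fun j k => (1 / (2 * Real.pi)) * ∫ x in (-Real.pi)..Real.pi,
    (ℓ x : ℂ) * Complex.exp (Complex.I * (((j : ℤ) - (k : ℤ) : ℤ) : ℂ) * (x : ℂ))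

/-!
The eigenvalues `λᵢ` of the Hermitian matrix `T_n(ℓ)` are at least `1/2`, because
`T_n(ℓ) - 1/2 = T_n(ℓ - 1/2)` has a nonnegative symbol, and they sum to `tr T_n(ℓ) = n`.
Since `log t ≥ (t - 1) - (t - 1)²` for `t ≥ 1/2`, this gives `log det T_n(ℓ) ≥ -∑ (λᵢ - 1)²`.
Finally `∑ (λᵢ - 1)²` is the squared Frobenius norm of `T_n(ℓ) - 1 = T_n(ℓ - 1)`, each row of
which consists of `n` distinct Fourier coefficients of `ℓ - 1`; by Bessel's inequality a row
contributes at most `‖ℓ - 1‖²_{L²(h)}`.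
-/

open scoped ComplexOrder MatrixOrder

namespace Matrix
variable {𝕜 n : Type*} [RCLike 𝕜] [Fintype n]

theorem IsHermitian.trace_mul_self {A : Matrix n n 𝕜} (hA : A.IsHermitian) :
    (A * A).trace = ∑ j, ∑ k, (‖A j k‖ ^ 2 : 𝕜) := by
  refine Finset.sum_congr rfl fun j _ => Finset.sum_congr rfl fun k _ => ?_
  show A j k * A k j = _
  rw [← hA.apply k j, RCLike.star_def, RCLike.mul_conj]

variable [DecidableEq n]

theorem trace_conjStarAlgAut (U : unitaryGroup n 𝕜) (X : Matrix n n 𝕜) :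
    (Unitary.conjStarAlgAut 𝕜 _ U X).trace = X.trace := by
  rw [Unitary.conjStarAlgAut_apply, trace_mul_cycle, Unitary.coe_star_mul_self, one_mul]

theorem IsHermitian.sum_sq_eigenvalues_sub {A : Matrix n n 𝕜} (hA : A.IsHermitian) (c : ℝ) :
    ∑ i, (hA.eigenvalues i - c) ^ 2 = ∑ j, ∑ k, ‖(A - algebraMap ℝ _ c) j k‖ ^ 2 := by
  set D : Matrix n n 𝕜 := diagonal fun i => ((hA.eigenvalues i - c : ℝ) : 𝕜)
  have hconj : A - algebraMap ℝ _ c = Unitary.conjStarAlgAut 𝕜 _ hA.eigenvectorUnitary D := by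
    conv_lhs => rw [hA.spectral_theorem]
    rw [IsScalarTower.algebraMap_apply ℝ 𝕜,
      ← AlgEquiv.commutes (Unitary.conjStarAlgAut 𝕜 _ hA.eigenvectorUnitary).toAlgEquiv,
      StarAlgEquiv.coe_toAlgEquiv, ← map_sub, algebraMap_eq_diagonal, diagonal_sub]
    simp [D]
  have hB : (A - algebraMap ℝ _ c).IsHermitian :=
    hA.sub (isHermitian_iff_isSelfAdjoint.mpr (.algebraMap _ (.all c)))
  suffices ((∑ i, (hA.eigenvalues i - c) ^ 2 : ℝ) : 𝕜) =
      ((∑ j, ∑ k, ‖(A - algebraMap ℝ _ c) j k‖ ^ 2 : ℝ) : 𝕜) from mod_cast this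
  calc ((∑ i, (hA.eigenvalues i - c) ^ 2 : ℝ) : 𝕜) = (D * D).trace := by
        simp [D, diagonal_mul_diagonal, trace_diagonal, sq]
    _ = ((A - algebraMap ℝ _ c) * (A - algebraMap ℝ _ c)).trace := by
        rw [hconj, ← map_mul, trace_conjStarAlgAut]
    _ = _ := by rw [hB.trace_mul_self]; push_cast; rfl

theorem IsHermitian.le_eigenvalues_of_posSemidef_sub {A : Matrix n n 𝕜} (hA : A.IsHermitian)
    {c : ℝ} (h : (A - algebraMap ℝ _ c).PosSemidef) (i : n) : c ≤ hA.eigenvalues i :=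
  (algebraMap_le_iff_le_spectrum hA.isSelfAdjoint).mp h _ (hA.eigenvalues_mem_spectrum_real i)

end Matrix

theorem sub_one_sub_sq_le_log {t : ℝ} (ht : 1 / 2 ≤ t) : (t - 1) - (t - 1) ^ 2 ≤ log t := by
  have ht0 : 0 < t := by linarith
  rcases le_or_gt 1 t with h1 | h1
  · have : 1 - t⁻¹ - ((t - 1) - (t - 1) ^ 2) = (t - 1) ^ 3 / t := by field_simp; ring
    have : 0 ≤ (t - 1) ^ 3 / t := by positivity
    linarith [one_sub_inv_le_log_of_pos ht0]
  · set y := (t - 1) - (t - 1) ^ 2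
    have hy : y ≤ 0 := by nlinarith
    have hexp : 1 ≤ t * exp (-y) := by
      nlinarith [mul_le_mul_of_nonneg_left (quadratic_le_exp_of_nonneg (neg_nonneg.mpr hy)) ht0.le]
    rw [le_log_iff_exp_le ht0]
    refine le_of_mul_le_mul_right ?_ (exp_pos (-y))
    rwa [← exp_add, add_neg_cancel, exp_zero]

theorem neg_sum_sq_le_sum_log {ι : Type*} (s : Finset ι) {t : ι → ℝ}
    (ht : ∀ i ∈ s, 1 / 2 ≤ t i) (hsum : ∑ i ∈ s, (t i - 1) = 0) :
    -∑ i ∈ s, (t i - 1) ^ 2 ≤ ∑ i ∈ s, log (t i) := by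
  calc -∑ i ∈ s, (t i - 1) ^ 2 = ∑ i ∈ s, ((t i - 1) - (t i - 1) ^ 2) := by
        rw [Finset.sum_sub_distrib, hsum, zero_sub]
    _ ≤ ∑ i ∈ s, log (t i) := Finset.sum_le_sum fun i hi => sub_one_sub_sq_le_log (ht i hi)

theorem neg_pi_lt_pi : -π < π := by linarith [Real.pi_pos]

theorem fourierCoeffOn_const {a b : ℝ} (hab : a < b) (c : ℂ) (m : ℤ) :
    fourierCoeffOn hab (fun _ => c) m = if m = 0 then c else 0 := by
  have := Fact.mk (by linarith : 0 < b - a)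
  have h : AddCircle.liftIoc (b - a) a (fun _ => c) =
      c • ⇑(fourier 0 : C(AddCircle (b - a), ℂ)) := by
    ext x; simp [AddCircle.liftIoc]
  rw [fourierCoeffOn, h, fourierCoeff.const_smul, fourierCoeff_fourier]
  by_cases hm : m = 0 <;> simp [hm]

theorem fourierCoeffOn_sub {a b : ℝ} (hab : a < b) {f g : ℝ → ℂ}
    (hf : IntervalIntegrable f volume a b) (hg : IntervalIntegrable g volume a b) (m : ℤ) :
    fourierCoeffOn hab (fun x => f x - g x) m =
      fourierCoeffOn hab f m - fourierCoeffOn hab g m := by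
  have hint : ∀ {h : ℝ → ℂ}, IntervalIntegrable h volume a b →
      IntervalIntegrable (fun x => fourier (-m) (x : AddCircle (b - a)) • h x) volume a b :=
    fun hh => hh.continuousOn_mul (by fun_prop)
  simp only [fourierCoeffOn_eq_integral, smul_sub,
    intervalIntegral.integral_sub (hint hf) (hint hg)]

theorem toeplitz_apply_eq_fourierCoeffOn (n : ℕ) (ℓ : ℝ → ℝ) (j k : Fin n) :
    toeplitz n ℓ j k = fourierCoeffOn neg_pi_lt_pi (fun x => (ℓ x : ℂ)) (k - j) := by
  rw [fourierCoeffOn_eq_integral, toeplitz, sub_neg_eq_add, ← two_mul, Complex.real_smul]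
  push_cast
  congr 1
  refine intervalIntegral.integral_congr fun x _ => ?_
  rw [fourier_coe_apply, smul_eq_mul, mul_comm]
  congr 2
  push_cast
  field_simp
  ring

theorem toeplitz_sub_const {ℓ : ℝ → ℝ} (hℓ : IntervalIntegrable ℓ volume (-π) π) (n : ℕ)
    (c : ℝ) :
    toeplitz n (fun x => ℓ x - c) = toeplitz n ℓ - algebraMap ℝ _ c := by
  ext j k
  have hℓ' : IntervalIntegrable (fun x => (ℓ x : ℂ)) volume (-π) π :=
    ⟨hℓ.1.ofReal, hℓ.2.ofReal⟩
  rw [Matrix.sub_apply, toeplitz_apply_eq_fourierCoeffOn, toeplitz_apply_eq_fourierCoeffOn,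
    algebraMap_matrix_apply]
  simp only [Complex.ofReal_sub]
  rw [fourierCoeffOn_sub _ hℓ' intervalIntegrable_const, fourierCoeffOn_const]
  simp [sub_eq_zero, eq_comm, Fin.val_inj]

theorem toeplitz_isHermitian (n : ℕ) (ℓ : ℝ → ℝ) : (toeplitz n ℓ).IsHermitian := by
  refine IsHermitian.ext fun j k => ?_
  simp only [toeplitz, RCLike.star_def, map_mul, ← intervalIntegral.intervalIntegral_conj]
  congr 1
  · simp [map_ofNat]
  · refine intervalIntegral.integral_congr fun x _ => ?_
    simp only [map_mul, Complex.conj_ofReal, ← Complex.exp_conj, Complex.conj_I, map_intCast]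
    push_cast
    ring_nf

theorem sum_eigenvalues_toeplitz (n : ℕ) (ℓ : ℝ → ℝ) :
    ∑ i, (toeplitz_isHermitian n ℓ).eigenvalues i = n * (1 / (2 * π) * ∫ x in -π..π, ℓ x) := by
  apply Complex.ofReal_injective
  simpa [trace, toeplitz, intervalIntegral.integral_ofReal] using
    (toeplitz_isHermitian n ℓ).trace_eq_sum_eigenvalues.symm

open Complex in
theorem star_dotProduct_toeplitz_mulVec {w : ℝ → ℝ} (hw : IntervalIntegrable w volume (-π) π)
    (n : ℕ) (u : Fin n → ℂ) :
    star u ⬝ᵥ (toeplitz n w *ᵥ u) = ((1 / (2 * π) *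
      ∫ x in -π..π, w x * ‖∑ k, u k * exp (-(I * (k : ℕ) * x))‖ ^ 2 : ℝ) : ℂ) := by
  set F : Fin n → Fin n → ℝ → ℂ := fun j k x =>
    star (u j) * ((w x : ℂ) * exp (I * (((j : ℤ) - (k : ℤ) : ℤ) : ℂ) * x)) * u k
  have hF : ∀ j k, IntervalIntegrable (F j k) volume (-π) π := by
    intro j k
    have hw' : IntervalIntegrable (fun x => (w x : ℂ)) volume (-π) π :=
      ⟨hw.1.ofReal, hw.2.ofReal⟩
    have hexp : Continuous fun x : ℝ => exp (I * (((j : ℤ) - (k : ℤ) : ℤ) : ℂ) * x) := by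
      fun_prop
    exact ((hw'.mul_continuousOn hexp.continuousOn).const_mul (star (u j))).mul_const (u k)
  have hpoint : ∀ x, ∑ p : Fin n × Fin n, F p.1 p.2 x =
      ((w x * ‖∑ k, u k * exp (-(I * (k : ℕ) * x))‖ ^ 2 : ℝ) : ℂ) := by
    intro x
    push_cast
    rw [← conj_mul', map_sum, Finset.sum_mul_sum, Fintype.sum_prod_type]
    simp_rw [Finset.mul_sum]
    refine Finset.sum_congr rfl fun j _ => Finset.sum_congr rfl fun k _ => ?_
    simp only [F, map_mul, RCLike.star_def, ← exp_conj, conj_I, conj_ofReal, map_neg,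
      map_natCast]
    rw [mul_mul_mul_comm, ← Complex.exp_add]
    push_cast
    ring_nf
  calc star u ⬝ᵥ (toeplitz n w *ᵥ u)
        = ∑ j, ∑ k, star (u j) * (toeplitz n w j k * u k) := by
        simp only [dotProduct, mulVec, Pi.star_apply, Finset.mul_sum]
    _ = ∑ j, ∑ k, (1 / (2 * π) : ℂ) * ∫ x in -π..π, F j k x := by
        simp only [toeplitz, F, intervalIntegral.integral_const_mul,
          intervalIntegral.integral_mul_const]
        exact Finset.sum_congr rfl fun j _ => Finset.sum_congr rfl fun k _ => by ring
    _ = (1 / (2 * π) : ℂ) * ∫ x in -π..π, ∑ p : Fin n × Fin n, F p.1 p.2 x := by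
        rw [intervalIntegral.integral_finsetSum fun p _ => hF p.1 p.2, Finset.mul_sum,
          Fintype.sum_prod_type]
    _ = _ := by simp_rw [hpoint]; rw [intervalIntegral.integral_ofReal]; push_cast; rfl

theorem toeplitz_posSemidef {w : ℝ → ℝ} (hw : IntervalIntegrable w volume (-π) π)
    (hw0 : 0 ≤ᵐ[volume.restrict (Set.Icc (-π) π)] w) (n : ℕ) : (toeplitz n w).PosSemidef := by
  refine .of_dotProduct_mulVec_nonneg (toeplitz_isHermitian n w) fun u => ?_
  rw [star_dotProduct_toeplitz_mulVec hw, Complex.zero_le_real]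
  refine mul_nonneg (by positivity)
    (intervalIntegral.integral_nonneg_of_ae_restrict neg_pi_lt_pi.le ?_)
  filter_upwards [hw0] with x hx using mul_nonneg hx (sq_nonneg _)

theorem sum_sq_norm_toeplitz_le {ℓ : ℝ → ℝ} (hℓ : MemLp ℓ 2 (volume.restrict (Set.Ioc (-π) π)))
    (n : ℕ) :
    ∑ j, ∑ k, ‖toeplitz n ℓ j k‖ ^ 2 ≤ n * (1 / (2 * π) * ∫ x in -π..π, ℓ x ^ 2) := by
  have hrow (j : Fin n) : ∑ k, ‖toeplitz n ℓ j k‖ ^ 2 ≤ 1 / (2 * π) * ∫ x in -π..π, ℓ x ^ 2 := by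
    have hBessel := sum_le_hasSum (Finset.univ.image fun k : Fin n => (k : ℤ) - j)
      (fun _ _ => sq_nonneg _) (hasSum_sq_fourierCoeffOn neg_pi_lt_pi hℓ.ofReal)
    rw [Finset.sum_image fun a _ b _ h => by simpa [Fin.val_inj] using h] at hBessel
    simp_rw [toeplitz_apply_eq_fourierCoeffOn]
    refine hBessel.trans_eq ?_
    simp only [smul_eq_mul, sub_neg_eq_add, ← two_mul, one_div, RCLike.norm_ofReal, sq_abs]
  calc ∑ j, ∑ k, ‖toeplitz n ℓ j k‖ ^ 2
      ≤ ∑ _j : Fin n, 1 / (2 * π) * ∫ x in -π..π, ℓ x ^ 2 := Finset.sum_le_sum fun j _ => hrow j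
    _ = _ := by simp

/-- Log-determinant lower bound for Toeplitz matrices: if `ℓ ∈ L²(h)` satisfies
`∫ ℓ h = 1` and `1/2 ≤ ℓ ≤ 3/2` a.e. on `[-π,π]`, then
`log det T_n(ℓ) ≥ -n ‖ℓ - 1‖²_{L²(h)}` (the determinant is real since `T_n(ℓ)`
is Hermitian). -/
theorem toeplitz_logdet_lower (n : ℕ) (ℓ : ℝ → ℝ)
    (hmeas : Measurable ℓ)
    (hL2 : IntegrableOn (fun x => ℓ x ^ 2) (Set.Icc (-Real.pi) Real.pi))
    (hmean : (1 / (2 * Real.pi)) * (∫ x in (-Real.pi)..Real.pi, ℓ x) = 1)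
    (hbdd : ∀ᵐ x ∂(volume.restrict (Set.Icc (-Real.pi) Real.pi)),
      1 / 2 ≤ ℓ x ∧ ℓ x ≤ 3 / 2) :
    Real.log ((toeplitz n ℓ).det.re) ≥
      -(n : ℝ) * ((1 / (2 * Real.pi)) * ∫ x in (-Real.pi)..Real.pi, (ℓ x - 1) ^ 2) := by
  have hℓ2 : MemLp ℓ 2 (volume.restrict (Set.Ioc (-π) π)) :=
    ((memLp_two_iff_integrable_sq hmeas.aestronglyMeasurable).mpr hL2).mono_measure
      (Measure.restrict_mono Set.Ioc_subset_Icc_self le_rfl)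
  have hℓ : IntervalIntegrable ℓ volume (-π) π :=
    (intervalIntegrable_iff_integrableOn_Ioc_of_le neg_pi_lt_pi.le).mpr (hℓ2.integrable one_le_two)
  have hA := toeplitz_isHermitian n ℓ
  have hev (i : Fin n) : 1 / 2 ≤ hA.eigenvalues i := by
    refine hA.le_eigenvalues_of_posSemidef_sub ?_ i
    rw [← toeplitz_sub_const hℓ]
    refine toeplitz_posSemidef (hℓ.sub intervalIntegrable_const) ?_ n
    filter_upwards [hbdd] with x hx using sub_nonneg.mpr hx.1
  have htrace : ∑ i, (hA.eigenvalues i - 1) = 0 := by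
    rw [Finset.sum_sub_distrib, sum_eigenvalues_toeplitz, hmean]
    simp
  have hsq : ∑ i, (hA.eigenvalues i - 1) ^ 2 ≤ n * (1 / (2 * π) * ∫ x in -π..π, (ℓ x - 1) ^ 2) := by
    rw [hA.sum_sq_eigenvalues_sub, ← toeplitz_sub_const hℓ]
    exact sum_sq_norm_toeplitz_le (hℓ2.sub (memLp_const 1)) n
  have hdet : (toeplitz n ℓ).det.re = ∏ i, hA.eigenvalues i := by
    rw [hA.det_eq_prod_eigenvalues]
    norm_cast
  rw [hdet, Real.log_prod fun i _ => (by linarith [hev i] : hA.eigenvalues i ≠ 0)]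
  linarith [neg_sum_sq_le_sum_log Finset.univ (fun i _ => hev i) htrace]
end
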